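/- Let μ > 0 and let p be a classical solution of the mean-field dispersion system with mean μ. Define G(t, z) = ∑_{n=0}^∞ p_n(t)·z^n, a(t) = μ − p_1(t), and v(t) = exp(∫_0^t e^{−t+s}·a(s) ds). Then for every real z ∈ [0, 2] and every t ≥ 0, G(t, 1 − z) = 1 + (G(0, 1 − z·e^{−t}) − 1 − μ·z·∫_0^t v(s)^{z·e^{−t+s}}·e^{−t+s} ds)·v(t)^{−z}. -/

import Mathlib

/-- The generator of the mean-field dispersion process. -/
noncomputable def dispGen (μ : ℝ) (q : ℕ → ℝ) : ℕ → ℝ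
  | 0 => -(μ - q 1) * q 0
  | 1 => 2 * q 2 - (μ - q 1) * (q 1 - q 0)
  | n + 2 => ((n : ℝ) + 3) * q (n + 3) - ((n : ℝ) + 2) * q (n + 2)
      - (μ - q 1) * (q (n + 2) - q (n + 1))

/-- A classical solution of the mean-field dispersion system with mean `μ`. -/
def IsSol (μ : ℝ) (p : ℝ → ℕ → ℝ) : Prop :=
  (∀ t, 0 ≤ t → ∀ n, 0 ≤ p t n) ∧
  (∀ t, 0 ≤ t → HasSum (fun n => p t n) 1) ∧
  (∀ t, 0 ≤ t → HasSum (fun n : ℕ => (n : ℝ) * p t n) μ) ∧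
  (∀ t, 0 ≤ t → ∀ n, HasDerivWithinAt (fun s => p s n) (dispGen μ (p t) n) (Set.Ici 0) t)

/-- The auxiliary function `v(t) = exp (∫_0^t e^{-t+s} (μ - p_1(s)) ds)`. -/
noncomputable def auxv (μ : ℝ) (p : ℝ → ℕ → ℝ) (t : ℝ) : ℝ :=
  Real.exp (∫ s in (0:ℝ)..t, Real.exp (-t + s) * (μ - p s 1))

/-- The probability generating function of the solution. -/
noncomputable def pgf (p : ℝ → ℕ → ℝ) (t z : ℝ) : ℝ := ∑' n : ℕ, p t n * z ^ n

/-!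
The generating function satisfies the first-order PDE `∂ₜG = (1 - x) (∂ₓG - p₁ - (μ - p₁) G)`.
Along a characteristic `φ' = φ - 1`, here `φ s = 1 - z e^{s-t}`, the transport terms cancel and
`h s = G(s, φ s)` solves the linear ODE `h' = (φ - 1) (p₁ + (μ - p₁) h)`; variation of constants,
with integrating factor `v(s)^{z e^{s-t}}`, gives the formula. Termwise differentiation of the
series is justified in integrated form by dominated convergence: as `p ≥ 0` has mass `1` and
mean `μ`, the series `∑ₙ |d/ds (pₙ φⁿ)|` is bounded by `6μ` as long as `|φ| ≤ 1`.
-/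

open Set Filter Topology MeasureTheory
open scoped Interval

theorem ContinuousOn.hasDerivWithinAt_Ici_integral {f : ℝ → ℝ} {a b x : ℝ}
    (hf : ContinuousOn f (Icc a b)) (hx : x ∈ Ico a b) :
    HasDerivWithinAt (fun u => ∫ r in a..u, f r) (f x) (Ici x) x := by
  have hmem : Icc a b ∈ 𝓝[>] x := nhdsWithin_mono x Ioi_subset_Ici_self (Icc_mem_nhdsGE_of_mem hx)
  exact intervalIntegral.integral_hasDerivWithinAt_right
    ((hf.mono (Icc_subset_Icc_right hx.2.le)).intervalIntegrable_of_Icc hx.1)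
    ⟨Icc a b, hmem, hf.aestronglyMeasurable measurableSet_Icc⟩
    ((hf x (Ico_subset_Icc_self hx)).mono_of_mem_nhdsWithin hmem)

theorem ContinuousOn.eq_of_linear_integral_equation {y α β : ℝ → ℝ} {a b : ℝ} (hab : a ≤ b)
    (hα : ContinuousOn α (Icc a b)) (hβ : ContinuousOn β (Icc a b))
    (hint : IntervalIntegrable (fun r => α r * y r + β r) volume a b)
    (hy : ∀ s ∈ Icc a b, y s = y a + ∫ r in a..s, α r * y r + β r) :
    y b = Real.exp (∫ r in a..b, α r) *
      (y a + ∫ r in a..b, Real.exp (-∫ u in a..r, α u) * β r) := by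
  have hy_cont : ContinuousOn y (Icc a b) := by
    have := intervalIntegral.continuousOn_primitive_interval' hint left_mem_uIcc
    rw [uIcc_of_le hab] at this
    exact (continuousOn_const.add this).congr fun s hs => hy s hs
  set A := fun s => ∫ u in a..s, α u
  have hA : ContinuousOn A (Icc a b) := by
    have := intervalIntegral.continuousOn_primitive_interval'
      (hα.intervalIntegrable_of_Icc (μ := volume) hab) left_mem_uIcc
    rwa [uIcc_of_le hab] at this
  have hE : ContinuousOn (fun r => Real.exp (-A r) * β r) (Icc a b) :=
    (hA.neg.rexp).mul hβ
  set F := fun s => Real.exp (-A s) * y s - ∫ r in a..s, Real.exp (-A r) * β r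
  have hF_cont : ContinuousOn F (Icc a b) := by
    have := intervalIntegral.continuousOn_primitive_interval'
      (hE.intervalIntegrable_of_Icc (μ := volume) hab) left_mem_uIcc
    rw [uIcc_of_le hab] at this
    exact ((hA.neg.rexp).mul hy_cont).sub this
  have hF_deriv : ∀ x ∈ Ico a b, HasDerivWithinAt F 0 (Ici x) x := by
    intro x hx
    have hy' : HasDerivWithinAt y (α x * y x + β x) (Ici x) x := by
      have h := ((hα.mul hy_cont).add hβ).hasDerivWithinAt_Ici_integral hx |>.const_add (y a)
      exact h.congr_of_eventuallyEq (eventually_of_mem (Icc_mem_nhdsGE_of_mem hx) hy)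
        (hy x (Ico_subset_Icc_self hx))
    have := ((hα.hasDerivWithinAt_Ici_integral hx).neg.exp.mul hy').sub
      (hE.hasDerivWithinAt_Ici_integral hx)
    refine this.congr_deriv ?_
    change Real.exp (-A x) * -α x * y x + Real.exp (-A x) * (α x * y x + β x)
      - Real.exp (-A x) * β x = 0
    ring
  have hFb := constant_of_has_deriv_right_zero hF_cont hF_deriv b (right_mem_Icc.2 hab)
  simp only [F, A, intervalIntegral.integral_same, neg_zero, Real.exp_zero, one_mul,
    sub_zero] at hFb
  rw [← hFb, sub_add_cancel, ← mul_assoc, ← Real.exp_add, add_neg_cancel, Real.exp_zero, one_mul]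

section SeriesIntegral

variable {f : ℕ → ℝ → ℝ} {g : ℝ → ℝ} {a b C : ℝ}

theorem intervalIntegrable_of_hasSum_of_norm_le (hab : a ≤ b)
    (hf : ∀ n, ContinuousOn (f n) (Icc a b)) (hg : ∀ x ∈ Icc a b, HasSum (f · x) (g x))
    (hC : ∀ x ∈ Icc a b, ‖g x‖ ≤ C) : IntervalIntegrable g volume a b := by
  refine IntegrableOn.intervalIntegrable ?_
  rw [uIcc_of_le hab]
  refine Integrable.of_bound ?_ C ((ae_restrict_iff' measurableSet_Icc).2 (.of_forall hC))
  exact aestronglyMeasurable_of_tendsto_ae atTop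
    (fun N => Finset.aestronglyMeasurable_fun_sum _ fun n _ =>
      (hf n).aestronglyMeasurable measurableSet_Icc)
    ((ae_restrict_iff' measurableSet_Icc).2 (.of_forall fun x hx => (hg x hx).tendsto_sum_nat))

variable (hab : a ≤ b) (hf : ∀ n, ContinuousOn (f n) (Icc a b))
  (hg : ∀ x ∈ Icc a b, HasSum (f · x) (g x))
  (hbound : ∀ x ∈ Icc a b, Summable (fun n => ‖f n x‖) ∧ ∑' n, ‖f n x‖ ≤ C)
include hab hf hg hbound

theorem intervalIntegrable_of_hasSum_of_tsum_norm_le : IntervalIntegrable g volume a b :=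
  intervalIntegrable_of_hasSum_of_norm_le hab hf hg fun x hx =>
    (hg x hx).tsum_eq ▸ (norm_tsum_le_tsum_norm (hbound x hx).1).trans (hbound x hx).2

theorem hasSum_intervalIntegral_of_tsum_norm_le :
    HasSum (fun n => ∫ x in a..b, f n x) (∫ x in a..b, g x) := by
  have hIoc : Ι a b ⊆ Icc a b := by rw [uIoc_of_le hab]; exact Ioc_subset_Icc_self
  refine intervalIntegral.hasSum_integral_of_dominated_convergence (fun n x => ‖f n x‖)
    (fun n => ((hf n).mono hIoc).aestronglyMeasurable measurableSet_uIoc)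
    (fun n => .of_forall fun x _ => le_rfl) (.of_forall fun x hx => (hbound x (hIoc hx)).1) ?_
    (.of_forall fun x hx => hg x (hIoc hx))
  refine intervalIntegrable_of_hasSum_of_norm_le (C := C) hab (fun n => (hf n).norm)
    (fun x hx => (hbound x hx).1.hasSum) fun x hx => ?_
  rw [Real.norm_of_nonneg (tsum_nonneg fun n => norm_nonneg _)]
  exact (hbound x hx).2

end SeriesIntegral

def seqShift (P : ℕ → ℝ) : ℕ → ℝ
  | 0 => 0
  | n + 1 => P n

theorem hasSum_seqShift {P : ℕ → ℝ} {S : ℝ} (h : HasSum P S) : HasSum (seqShift P) S :=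
  (hasSum_nat_add_iff' 1).1 (by simpa [seqShift] using h)

theorem Summable.mul_pow_of_abs_le_one {P : ℕ → ℝ} (hP : Summable P) {x : ℝ} (hx : |x| ≤ 1)
    (k : ℕ → ℕ) : Summable fun n => P n * x ^ k n :=
  hP.abs.of_norm_bounded fun n => by
    rw [norm_mul, norm_pow, Real.norm_eq_abs, Real.norm_eq_abs]
    exact mul_le_of_le_one_right (abs_nonneg _) (pow_le_one₀ (abs_nonneg x) hx)

theorem hasSum_dispGen_mul_pow {μ : ℝ} {P : ℕ → ℝ} {x S D : ℝ}
    (hS : HasSum (fun n => P n * x ^ n) S) (hD : HasSum (fun n : ℕ => n * P n * x ^ (n - 1)) D) :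
    HasSum (fun n => dispGen μ P n * x ^ n) ((1 - x) * (D - P 1 - (μ - P 1) * S)) := by
  have hD₁ : HasSum (fun n : ℕ => ((n : ℝ) + 1) * P (n + 1) * x ^ n) D := by
    simpa using (hasSum_nat_add_iff' 1).2 hD
  have hxD : HasSum (fun n : ℕ => n * P n * x ^ n) (x * D) := by
    refine (hD.mul_left x).congr_fun fun n => ?_
    rcases n with _ | n
    · simp
    · simp only [Nat.add_sub_cancel, pow_succ]; ring
  have hxS : HasSum (fun n => seqShift P n * x ^ n) (x * S) := by
    refine (hasSum_seqShift (hS.mul_left x)).congr_fun fun n => ?_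
    rcases n with _ | n
    · simp [seqShift]
    · simp only [seqShift, pow_succ]; ring
  rw [show (1 - x) * (D - P 1 - (μ - P 1) * S)
      = D - x * D - (μ - P 1) * (S - x * S) + P 1 * x - P 1 by ring]
  refine ((((hD₁.sub hxD).sub ((hS.sub hxS).mul_left (μ - P 1))).add
    (hasSum_ite_eq 1 (P 1 * x))).sub (hasSum_ite_eq 0 (P 1))).congr_fun fun n => ?_
  rcases n with _ | _ | n <;>
    simp only [dispGen, seqShift, Nat.cast_add, Nat.cast_one, Nat.cast_zero, zero_ne_one,
      one_ne_zero, Nat.add_eq_right, Nat.add_eq_zero_iff, and_false, ↓reduceIte] <;> ring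

theorem abs_dispGen_le {μ : ℝ} {P : ℕ → ℝ} (hP : ∀ n, 0 ≤ P n) (n : ℕ) :
    |dispGen μ P n| ≤ (n + 1) * P (n + 1) + n * P n + |μ - P 1| * (P n + seqShift P n) := by
  have ha₁ := le_abs_self (μ - P 1)
  have ha₂ := neg_abs_le (μ - P 1)
  rcases n with _ | _ | n <;> simp only [dispGen, seqShift] <;> rw [abs_le] <;> push_cast
  · constructor <;> nlinarith [hP 0, hP 1]
  · constructor <;> nlinarith [hP 0, hP 1, hP 2]
  · have : (0 : ℝ) ≤ n := n.cast_nonneg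
    constructor <;> nlinarith [hP (n + 1), hP (n + 2), hP (n + 3)]

/-- `charDeriv μ (p s) (φ s) n` is `d/ds (pₙ(s) φ(s)ⁿ)` when `φ' = φ - 1`. -/
noncomputable def charDeriv (μ : ℝ) (P : ℕ → ℝ) (x : ℝ) (n : ℕ) : ℝ :=
  dispGen μ P n * x ^ n + P n * (n * x ^ (n - 1) * (x - 1))

theorem hasSum_charDeriv {μ : ℝ} {P : ℕ → ℝ} {x S D : ℝ}
    (hS : HasSum (fun n => P n * x ^ n) S) (hD : HasSum (fun n : ℕ => n * P n * x ^ (n - 1)) D) :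
    HasSum (charDeriv μ P x) ((x - 1) * (P 1 + (μ - P 1) * S)) := by
  rw [show (x - 1) * (P 1 + (μ - P 1) * S)
      = (1 - x) * (D - P 1 - (μ - P 1) * S) + (x - 1) * D by ring]
  exact ((hasSum_dispGen_mul_pow hS hD).add (hD.mul_left (x - 1))).congr_fun fun n => by
    simp only [charDeriv]; ring

theorem tsum_norm_charDeriv_le {μ : ℝ} {P : ℕ → ℝ} {x : ℝ} (hP : ∀ n, 0 ≤ P n) (h1 : HasSum P 1)
    (hμ : HasSum (fun n : ℕ => n * P n) μ) (hx : |x| ≤ 1) :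
    Summable (fun n => ‖charDeriv μ P x n‖) ∧ ∑' n, ‖charDeriv μ P x n‖ ≤ 6 * μ := by
  set U : ℕ → ℝ := fun n => (n + 1) * P (n + 1) + n * P n + |μ - P 1| * (P n + seqShift P n)
    + 2 * (n * P n)
  have hU : HasSum U (μ + μ + |μ - P 1| * (1 + 1) + 2 * μ) := by
    have hμ₁ : HasSum (fun n : ℕ => ((n : ℝ) + 1) * P (n + 1)) μ := by
      simpa using (hasSum_nat_add_iff' 1).2 hμ
    exact (((hμ₁.add hμ).add ((h1.add (hasSum_seqShift h1)).mul_left _)).add (hμ.mul_left 2))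
  have hUn : ∀ n, ‖charDeriv μ P x n‖ ≤ U n := fun n => by
    have hxn : |x| ^ n ≤ 1 := pow_le_one₀ (abs_nonneg x) hx
    have hxn' : |x| ^ (n - 1) ≤ 1 := pow_le_one₀ (abs_nonneg x) hx
    have hx1 : |x - 1| ≤ 2 := (abs_sub _ _).trans (by rw [abs_one]; linarith)
    have hnP : 0 ≤ (n : ℝ) * P n := mul_nonneg n.cast_nonneg (hP n)
    calc ‖charDeriv μ P x n‖
        ≤ |dispGen μ P n| * |x| ^ n + (n * P n) * (|x| ^ (n - 1) * |x - 1|) := by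
          rw [Real.norm_eq_abs, charDeriv]
          refine (abs_add_le _ _).trans_eq ?_
          rw [abs_mul, abs_pow, abs_mul, abs_mul, abs_mul, abs_pow, abs_of_nonneg (hP n),
            Nat.abs_cast]
          ring
      _ ≤ |dispGen μ P n| * 1 + (n * P n) * (1 * 2) := by gcongr
      _ ≤ U n := by linarith [abs_dispGen_le (μ := μ) hP n]
  have hP1 : P 1 ≤ μ := by simpa using le_hasSum hμ 1 fun n _ => mul_nonneg n.cast_nonneg (hP n)
  have hsum : Summable (fun n => ‖charDeriv μ P x n‖) :=
    hU.summable.of_nonneg_of_le (fun n => norm_nonneg _) hUn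
  refine ⟨hsum, (hsum.tsum_le_tsum hUn hU.summable).trans ?_⟩
  rw [hU.tsum_eq, abs_of_nonneg (sub_nonneg.2 hP1)]
  linarith [hP 1]

namespace IsSol

variable {μ : ℝ} {p : ℝ → ℕ → ℝ}

theorem continuousOn (hp : IsSol μ p) (n : ℕ) : ContinuousOn (fun s => p s n) (Ici 0) :=
  fun s hs => (hp.2.2.2 s hs n).continuousWithinAt

theorem continuousOn_dispGen (hp : IsSol μ p) (n : ℕ) :
    ContinuousOn (fun s => dispGen μ (p s) n) (Ici 0) := by
  have := hp.continuousOn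
  rcases n with _ | _ | n <;> simp only [dispGen] <;> fun_prop

theorem hasSum_charDeriv (hp : IsSol μ p) {s x : ℝ} (hs : 0 ≤ s) (hx : |x| ≤ 1) :
    HasSum (charDeriv μ (p s) x) ((x - 1) * (p s 1 + (μ - p s 1) * pgf p s x)) :=
  _root_.hasSum_charDeriv ((hp.2.1 s hs).summable.mul_pow_of_abs_le_one hx id).hasSum
    ((hp.2.2.1 s hs).summable.mul_pow_of_abs_le_one hx (· - 1)).hasSum

theorem tsum_norm_charDeriv_le (hp : IsSol μ p) {s x : ℝ} (hs : 0 ≤ s) (hx : |x| ≤ 1) :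
    Summable (fun n => ‖charDeriv μ (p s) x n‖) ∧ ∑' n, ‖charDeriv μ (p s) x n‖ ≤ 6 * μ :=
  _root_.tsum_norm_charDeriv_le (hp.1 s hs) (hp.2.1 s hs) (hp.2.2.1 s hs) hx

variable {φ : ℝ → ℝ}

theorem continuousOn_charDeriv (hp : IsSol μ p) (hφ : Continuous φ) (n : ℕ) :
    ContinuousOn (fun s => charDeriv μ (p s) (φ s) n) (Ici 0) := by
  have := hp.continuousOn
  have := hp.continuousOn_dispGen
  simp only [charDeriv]
  fun_prop

theorem mul_pow_sub_eq_integral_charDeriv (hp : IsSol μ p) (hφ : ∀ s, HasDerivAt φ (φ s - 1) s)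
    (n : ℕ) {s : ℝ} (hs : 0 ≤ s) :
    p s n * φ s ^ n - p 0 n * φ 0 ^ n = ∫ r in 0..s, charDeriv μ (p r) (φ r) n := by
  have hφc : Continuous φ := continuous_iff_continuousAt.2 fun s => (hφ s).continuousAt
  refine (intervalIntegral.integral_eq_sub_of_hasDeriv_right_of_le hs
    (((hp.continuousOn n).mul (hφc.pow n).continuousOn).mono Icc_subset_Ici_self)
    (fun r hr => ?_)
    (((hp.continuousOn_charDeriv hφc n).mono Icc_subset_Ici_self).intervalIntegrable_of_Icc
      hs)).symm
  exact ((hp.2.2.2 r hr.1.le n).mul ((hφ r).hasDerivWithinAt.pow n)).mono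
    (Ioi_subset_Ici_self.trans (Ici_subset_Ici.2 hr.1.le))

variable {s t : ℝ}

theorem intervalIntegrable_pgf_comp (hp : IsSol μ p) (hφ : ∀ s, HasDerivAt φ (φ s - 1) s)
    (hs : 0 ≤ s) (hφs : ∀ r ∈ Icc 0 s, |φ r| ≤ 1) :
    IntervalIntegrable (fun r => (φ r - 1) * (p r 1 + (μ - p r 1) * pgf p r (φ r))) volume 0 s := by
  have hφc : Continuous φ := continuous_iff_continuousAt.2 fun r => (hφ r).continuousAt
  exact intervalIntegrable_of_hasSum_of_tsum_norm_le hs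
    (fun n => (hp.continuousOn_charDeriv hφc n).mono Icc_subset_Ici_self)
    (fun r hr => hp.hasSum_charDeriv hr.1 (hφs r hr))
    (fun r hr => hp.tsum_norm_charDeriv_le hr.1 (hφs r hr))

theorem pgf_comp_eq_add_integral (hp : IsSol μ p) (hφ : ∀ s, HasDerivAt φ (φ s - 1) s)
    (hs : 0 ≤ s) (hφs : ∀ r ∈ Icc 0 s, |φ r| ≤ 1) :
    pgf p s (φ s) = pgf p 0 (φ 0)
      + ∫ r in 0..s, (φ r - 1) * (p r 1 + (μ - p r 1) * pgf p r (φ r)) := by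
  have hφc : Continuous φ := continuous_iff_continuousAt.2 fun r => (hφ r).continuousAt
  have hterms := hasSum_intervalIntegral_of_tsum_norm_le hs
    (fun n => (hp.continuousOn_charDeriv hφc n).mono Icc_subset_Ici_self)
    (fun r hr => hp.hasSum_charDeriv hr.1 (hφs r hr))
    (fun r hr => hp.tsum_norm_charDeriv_le hr.1 (hφs r hr))
  have hpgf : ∀ r ∈ Icc 0 s, HasSum (fun n => p r n * φ r ^ n) (pgf p r (φ r)) := fun r hr =>
    ((hp.2.1 r hr.1).summable.mul_pow_of_abs_le_one (hφs r hr) id).hasSum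
  have hdiff := (hpgf s ⟨hs, le_rfl⟩).sub (hpgf 0 ⟨le_rfl, hs⟩)
  simp_rw [hp.mul_pow_sub_eq_integral_charDeriv hφ _ hs] at hdiff
  rw [hterms.unique hdiff]
  ring

theorem pgf_comp_eq_of_characteristic (hp : IsSol μ p) (hφ : ∀ s, HasDerivAt φ (φ s - 1) s)
    (ht : 0 ≤ t) (hφt : ∀ s ∈ Icc 0 t, |φ s| ≤ 1) :
    pgf p t (φ t) = 1 + (pgf p 0 (φ 0) - 1
      - μ * ∫ r in 0..t, Real.exp (∫ u in 0..r, (1 - φ u) * (μ - p u 1)) * (1 - φ r))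
      * Real.exp (-∫ r in 0..t, (1 - φ r) * (μ - p r 1)) := by
  have hφc : Continuous φ := continuous_iff_continuousAt.2 fun r => (hφ r).continuousAt
  have hp₁ : ContinuousOn (fun r => p r 1) (Icc 0 t) := (hp.continuousOn 1).mono Icc_subset_Ici_self
  have hrhs : (fun r => -((1 - φ r) * (μ - p r 1)) * (pgf p r (φ r) - 1) + -((1 - φ r) * μ))
      = fun r => (φ r - 1) * (p r 1 + (μ - p r 1) * pgf p r (φ r)) := by
    funext r; ring
  have hode := ContinuousOn.eq_of_linear_integral_equation (y := fun s => pgf p s (φ s) - 1)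
    (α := fun r => -((1 - φ r) * (μ - p r 1))) (β := fun r => -((1 - φ r) * μ)) ht
    (by fun_prop) (by fun_prop) (hrhs ▸ hp.intervalIntegrable_pgf_comp hφ ht hφt) fun s hs => by
      rw [hrhs, hp.pgf_comp_eq_add_integral hφ hs.1 fun r hr => hφt r ⟨hr.1, hr.2.trans hs.2⟩]
      ring
  have hβ : ∫ r in 0..t, Real.exp (-∫ u in 0..r, -((1 - φ u) * (μ - p u 1))) * -((1 - φ r) * μ)
      = -(μ * ∫ r in 0..t, Real.exp (∫ u in 0..r, (1 - φ u) * (μ - p u 1)) * (1 - φ r)) := by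
    rw [← intervalIntegral.integral_const_mul, ← intervalIntegral.integral_neg]
    refine intervalIntegral.integral_congr fun r _ => ?_
    simp only [intervalIntegral.integral_neg, neg_neg]
    ring
  rw [hβ, intervalIntegral.integral_neg] at hode
  linear_combination hode

end IsSol

theorem auxv_rpow (μ : ℝ) (p : ℝ → ℕ → ℝ) (r z t : ℝ) :
    auxv μ p r ^ (z * Real.exp (-t + r))
      = Real.exp (∫ u in 0..r, z * Real.exp (-t + u) * (μ - p u 1)) := by
  rw [auxv, ← Real.exp_mul, ← intervalIntegral.integral_mul_const]
  congr 1
  refine intervalIntegral.integral_congr fun u _ => ?_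
  have : Real.exp (-r + u) * Real.exp (-t + r) = Real.exp (-t + u) := by
    rw [← Real.exp_add]; ring_nf
  linear_combination (z * (μ - p u 1)) * this

theorem pgf_explicit_formula_general (μ : ℝ) (p : ℝ → ℕ → ℝ) (hp : IsSol μ p) :
    ∀ z ∈ Set.Icc (0:ℝ) 2, ∀ t : ℝ, 0 ≤ t →
      pgf p t (1 - z) = 1 +
        (pgf p 0 (1 - z * Real.exp (-t)) - 1
          - μ * z * ∫ s in (0:ℝ)..t,
              (auxv μ p s) ^ (z * Real.exp (-t + s)) * Real.exp (-t + s))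
        * (auxv μ p t) ^ (-z) := by
  rintro z ⟨hz₀, hz₂⟩ t ht
  have hφ : ∀ s, HasDerivAt (fun s => 1 - z * Real.exp (-t + s))
      ((1 - z * Real.exp (-t + s)) - 1) s := fun s =>
    ((((hasDerivAt_id s).const_add (-t)).exp.const_mul z).const_sub 1).congr_deriv (by simp)
  have hφt : ∀ s ∈ Icc 0 t, |1 - z * Real.exp (-t + s)| ≤ 1 := fun s hs => by
    have : Real.exp (-t + s) ≤ 1 := Real.exp_le_one_iff.2 (by linarith [hs.2])
    rw [abs_le]; constructor <;> nlinarith [Real.exp_pos (-t + s)]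
  have hvt : auxv μ p t ^ (-z) = Real.exp (-∫ u in 0..t, z * Real.exp (-t + u) * (μ - p u 1)) := by
    simpa [intervalIntegral.integral_neg] using auxv_rpow μ p t (-z) t
  have key := hp.pgf_comp_eq_of_characteristic hφ ht hφt
  simp only [sub_sub_cancel, neg_add_cancel, Real.exp_zero, mul_one, add_zero] at key
  simp_rw [key, hvt, auxv_rpow, mul_assoc μ z, ← intervalIntegral.integral_const_mul,
    mul_left_comm z]

theorem pgf_explicit_formula (μ : ℝ) (hμ : 0 < μ) (p : ℝ → ℕ → ℝ) (hp : IsSol μ p) :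
    ∀ z ∈ Set.Icc (0:ℝ) 2, ∀ t : ℝ, 0 ≤ t →
      pgf p t (1 - z) = 1 +
        (pgf p 0 (1 - z * Real.exp (-t)) - 1
          - μ * z * ∫ s in (0:ℝ)..t,
              (auxv μ p s) ^ (z * Real.exp (-t + s)) * Real.exp (-t + s))
        * (auxv μ p t) ^ (-z) :=
  pgf_explicit_formula_general μ p hp
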